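/- Let $A$ be an admissible ring with basis of ideals of definition $\{I_i\}$, let $I \subseteq A$ be a closed ideal, and let $B$ be an admissible ring with basis of ideals of definition $\{J_i\}$, together with a continuous homomorphism $A \to B$ such that the image of $I_i$ in $B$ lies in $J_i$ for every $i$. Then there is a topological ring isomorphism $(A/I) \hat{\otimes}_A B \cong B/\overline{IB}$, where $(A/I)\hat{\otimes}_A B := \varprojlim_i \left( (A/(I_i+I)) \otimes_{A/I_i} B/J_i \right)$ and $\overline{IB}$ is the topological closure of the ideal $IB$ in $B$. -/

import Mathlib

open Filter Topology

/-- The descending chain `I` of ideals is a basis of neighborhoods of `0`. -/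
def IsChainBasis (A : Type*) [CommRing A] [TopologicalSpace A] (I : ℕ → Ideal A) : Prop :=
  Antitone I ∧ ∀ s : Set A, s ∈ nhds (0 : A) ↔ ∃ i, (I i : Set A) ⊆ s

/-- An ideal of definition: an open ideal all of whose elements are topologically nilpotent. -/
def IsIdealOfDefinition (A : Type*) [CommRing A] [TopologicalSpace A] (J : Ideal A) : Prop :=
  IsOpen (J : Set A) ∧ ∀ x ∈ J, Filter.Tendsto (fun n => x ^ n) Filter.atTop (nhds (0 : A))

/-- An admissible ring: a topological ring, linearly topologized with a countable chain of
ideals as a basis of neighborhoods of `0`, separated, complete, admitting an ideal of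
definition. -/
structure IsAdmissible (A : Type*) [CommRing A] [TopologicalSpace A] : Prop where
  topRing : IsTopologicalRing A
  exists_chain : ∃ I : ℕ → Ideal A, IsChainBasis A I
  separated : ∀ x : A, (∀ U ∈ nhds (0 : A), x ∈ U) → x = 0
  complete : ∀ f : ℕ → A,
    (∀ U ∈ nhds (0 : A), ∃ N, ∀ m ≥ N, ∀ n ≥ N, f m - f n ∈ U) →
    ∃ a : A, ∀ U ∈ nhds (0 : A), ∃ N, ∀ n ≥ N, a - f n ∈ U
  exists_idealOfDef : ∃ J : Ideal A, IsIdealOfDefinition A J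


section CompletedTensor

variable (A : Type*) [CommRing A] (B : Type*) [CommRing B] (φ : A →+* B)
  (I' : Ideal A) (I : ℕ → Ideal A) (J : ℕ → Ideal B)
  (hmap : ∀ i, Ideal.map φ (I i) ≤ J i)

/-- The structural homomorphism `A ⧸ I i → B ⧸ J i` induced by `φ`. -/
noncomputable def rN (i : ℕ) : A ⧸ I i →+* B ⧸ J i :=
  Ideal.Quotient.lift (I i) ((Ideal.Quotient.mk (J i)).comp φ)
    (fun a ha => by
      have h : φ a ∈ J i := hmap i (Ideal.mem_map_of_mem φ ha)
      simpa [RingHom.comp_apply, Ideal.Quotient.eq_zero_iff_mem] using h)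

/-- `A ⧸ (I' ⊔ I i)` as an `A ⧸ I i`-algebra. -/
noncomputable def algM (i : ℕ) : Algebra (A ⧸ I i) (A ⧸ (I' ⊔ I i)) :=
  (Ideal.Quotient.factor (S := I i) (T := I' ⊔ I i) le_sup_right).toAlgebra

/-- `B ⧸ J i` as an `A ⧸ I i`-algebra. -/
noncomputable def algN (i : ℕ) : Algebra (A ⧸ I i) (B ⧸ J i) :=
  (rN A B φ I J hmap i).toAlgebra

/-- The level-`i` tensor product `(A/(I' + Iᵢ)) ⊗_{A/Iᵢ} (B/Jᵢ)`. -/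
noncomputable def tensorLevel (i : ℕ) : Type _ :=
  letI := algM A I' I i
  letI := algN A B φ I J hmap i
  TensorProduct (A ⧸ I i) (A ⧸ (I' ⊔ I i)) (B ⧸ J i)

noncomputable instance tensorLevelCommRing (i : ℕ) :
    CommRing (tensorLevel A B φ I' I J hmap i) :=
  letI := algM A I' I i
  letI := algN A B φ I J hmap i
  (inferInstance : CommRing (TensorProduct (A ⧸ I i) (A ⧸ (I' ⊔ I i)) (B ⧸ J i)))

end CompletedTensor

section CompletedTensor2

variable (A : Type*) [CommRing A] (B : Type*) [CommRing B] (φ : A →+* B)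
  (I' : Ideal A) (I : ℕ → Ideal A) (J : ℕ → Ideal B)
  (hmap : ∀ i, Ideal.map φ (I i) ≤ J i)
  (hdesc : ∀ i, I (i + 1) ≤ I i) (hJdesc : ∀ i, J (i + 1) ≤ J i)

/-- The transition map between consecutive levels of the completed tensor product. -/
noncomputable def tensorTrans (i : ℕ) :
    tensorLevel A B φ I' I J hmap (i + 1) →+* tensorLevel A B φ I' I J hmap i :=
  letI := algM A I' I i
  letI := algN A B φ I J hmap i
  letI := algM A I' I (i + 1)
  letI := algN A B φ I J hmap (i + 1)
  letI : Algebra (A ⧸ I (i + 1))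
      (TensorProduct (A ⧸ I i) (A ⧸ (I' ⊔ I i)) (B ⧸ J i)) :=
    ((algebraMap (A ⧸ I i) (TensorProduct (A ⧸ I i) (A ⧸ (I' ⊔ I i)) (B ⧸ J i))).comp
      (Ideal.Quotient.factor (S := I (i + 1)) (T := I i) (hdesc i))).toAlgebra
  letI f1 : (A ⧸ (I' ⊔ I (i + 1))) →ₐ[A ⧸ I (i + 1)]
      TensorProduct (A ⧸ I i) (A ⧸ (I' ⊔ I i)) (B ⧸ J i) :=
    { toRingHom := (Algebra.TensorProduct.includeLeftRingHom :
          (A ⧸ (I' ⊔ I i)) →+* TensorProduct (A ⧸ I i) (A ⧸ (I' ⊔ I i)) (B ⧸ J i)).comp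
        (Ideal.Quotient.factor (S := I' ⊔ I (i + 1)) (T := I' ⊔ I i) (sup_le_sup_left (hdesc i) I'))
      commutes' := fun r => Quotient.inductionOn' r (fun a => by
        simp only [RingHom.coe_comp, RingHom.coe_coe, Function.comp_apply,
          RingHom.algebraMap_toAlgebra, RingHom.comp_apply]
        show Algebra.TensorProduct.includeLeftRingHom
            (Ideal.Quotient.factor _ (Ideal.Quotient.factor _ (Ideal.Quotient.mk _ a)))
          = algebraMap (A ⧸ I i) _ (Ideal.Quotient.factor _ (Ideal.Quotient.mk _ a))
        rw [Ideal.Quotient.factor_mk, Ideal.Quotient.factor_mk, Ideal.Quotient.factor_mk,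
          Algebra.TensorProduct.includeLeftRingHom_apply, Algebra.TensorProduct.algebraMap_apply]
        rfl) }
  letI f2 : (B ⧸ J (i + 1)) →ₐ[A ⧸ I (i + 1)]
      TensorProduct (A ⧸ I i) (A ⧸ (I' ⊔ I i)) (B ⧸ J i) :=
    { toRingHom := ((Algebra.TensorProduct.includeRight :
          (B ⧸ J i) →ₐ[A ⧸ I i]
            TensorProduct (A ⧸ I i) (A ⧸ (I' ⊔ I i)) (B ⧸ J i)).toRingHom).comp
        (Ideal.Quotient.factor (S := J (i + 1)) (T := J i) (hJdesc i))
      commutes' := fun r => Quotient.inductionOn' r (fun a => by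
        simp only [RingHom.coe_comp, RingHom.coe_coe, Function.comp_apply,
          RingHom.algebraMap_toAlgebra, RingHom.comp_apply]
        show Algebra.TensorProduct.includeRight
            (Ideal.Quotient.factor _ (rN A B φ I J hmap (i+1) (Ideal.Quotient.mk _ a)))
          = algebraMap (A ⧸ I i) _ (Ideal.Quotient.factor _ (Ideal.Quotient.mk _ a))
        rw [Ideal.Quotient.factor_mk, Algebra.TensorProduct.algebraMap_apply']
        show Algebra.TensorProduct.includeRight
            (Ideal.Quotient.factor _ ((Ideal.Quotient.mk (J (i+1))) (φ a)))
          = 1 ⊗ₜ[A ⧸ I i] algebraMap (A ⧸ I i) (B ⧸ J i) (Ideal.Quotient.mk (I i) a)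
        rw [Ideal.Quotient.factor_mk, Algebra.TensorProduct.includeRight_apply]
        rfl) }
  (Algebra.TensorProduct.lift f1 f2 (fun x y => Commute.all _ _)).toRingHom

end CompletedTensor2

section CompletedTensor3

variable (A : Type*) [CommRing A] (B : Type*) [CommRing B] (φ : A →+* B)
  (I' : Ideal A) (I : ℕ → Ideal A) (J : ℕ → Ideal B)
  (hmap : ∀ i, Ideal.map φ (I i) ≤ J i)
  (hdesc : ∀ i, I (i + 1) ≤ I i) (hJdesc : ∀ i, J (i + 1) ≤ J i)

/-- The completed tensor product `(A/I') ⊗̂_A B`, realized as the inverse limit of the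
level tensor products along the transition maps. -/
noncomputable def limTensor : Subring (∀ i, tensorLevel A B φ I' I J hmap i) where
  carrier := {g | ∀ i, tensorTrans A B φ I' I J hmap hdesc hJdesc i (g (i + 1)) = g i}
  zero_mem' := by intro i; simp
  one_mem' := by intro i; simp
  add_mem' := by intro a b ha hb i; simp [map_add, ha i, hb i]
  mul_mem' := by intro a b ha hb i; simp [map_mul, ha i, hb i]
  neg_mem' := by intro a ha i; simp [map_neg, ha i]

/-- The inverse limit topology on the completed tensor product (each level discrete). -/
noncomputable def limTensorTopology :
    TopologicalSpace (limTensor A B φ I' I J hmap hdesc hJdesc) :=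
  TopologicalSpace.induced Subtype.val
    (@Pi.topologicalSpace ℕ (fun i => tensorLevel A B φ I' I J hmap i) (fun _ => ⊥))

end CompletedTensor3

/-! At level `i` the tensor product `(A/(I' + Iᵢ)) ⊗_{A/Iᵢ} (B/Jᵢ)` is `B/(I'B + Jᵢ)`: the
canonical map from `B` is onto because `A/Iᵢ → A/(I' + Iᵢ)` is, and a retraction onto
`B/(I'B + Jᵢ)` computes its kernel. Hence the map from `B` to the inverse limit has kernel
`⋂ᵢ (I'B + Jᵢ)`, which is the closure of `I'B`, and it is onto by completeness of `B`: lifts of a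
compatible family differ by elements of `I'B + Jᵢ`, and after correcting them by elements of `I'B`
they form a Cauchy sequence. The sets "zero at level `i`" in the limit correspond to the images
of the `Jᵢ` in `B/closure(I'B)`, so the resulting isomorphism is a homeomorphism. -/

namespace IsChainBasis

variable {B : Type*} [CommRing B] [TopologicalSpace B] {J : ℕ → Ideal B}

theorem mem_nhds_zero (hJ : IsChainBasis B J) (i : ℕ) : (J i : Set B) ∈ 𝓝 (0 : B) :=
  (hJ.2 _).mpr ⟨i, subset_rfl⟩

variable [IsTopologicalRing B]

theorem mem_topologicalClosure_iff (hJ : IsChainBasis B J) (S : Ideal B) {x : B} :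
    x ∈ S.topologicalClosure ↔ ∀ i, x ∈ S ⊔ J i := by
  rw [← SetLike.mem_coe, Submodule.topologicalClosure_coe, mem_closure_iff_nhds_zero]
  simp_rw [Submodule.mem_sup]
  constructor
  · intro h i
    obtain ⟨y, hy, hyx⟩ := h _ (hJ.mem_nhds_zero i)
    exact ⟨y, hy, x - y, by simpa using (J i).neg_mem hyx, add_sub_cancel y x⟩
  · intro h U hU
    obtain ⟨i, hi⟩ := (hJ.2 U).mp hU
    obtain ⟨y, hy, z, hz, rfl⟩ := h i
    exact ⟨y, hy, hi (by simpa using (J i).neg_mem hz)⟩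

theorem continuous_of_le_ker (hJ : IsChainBasis B J) {T : Type*} [Ring T] [TopologicalSpace T]
    [DiscreteTopology T] (f : B →+* T) {i : ℕ} (hi : J i ≤ RingHom.ker f) : Continuous f := by
  refine continuous_of_continuousAt_zero f ?_
  rw [ContinuousAt, map_zero, nhds_discrete T, tendsto_pure]
  exact mem_of_superset (hJ.mem_nhds_zero i) hi

theorem continuous_ringEquiv_symm (hJ : IsChainBasis B J) {K : Ideal B} {L : Type*} [Ring L]
    [TopologicalSpace L] [IsTopologicalAddGroup L] (e : B ⧸ K ≃+* L)
    (he : ∀ i, e.symm ⁻¹' (Ideal.Quotient.mk K '' J i) ∈ 𝓝 (0 : L)) : Continuous e.symm := by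
  refine continuous_of_continuousAt_zero e.symm fun V hV => ?_
  rw [map_zero] at hV
  obtain ⟨i, hi⟩ := (hJ.2 _).mp <| (QuotientRing.isOpenQuotientMap_mk (N := K)).continuous.continuousAt
    (x := (0 : B)) (by rwa [map_zero])
  exact mem_of_superset (he i) fun g ⟨j, hj, hjg⟩ => hjg ▸ hi hj

end IsChainBasis

theorem Submodule.exists_sub_mem_of_succ_sub_mem_sup {R M : Type*} [Ring R] [AddCommGroup M]
    [Module R M] (S : Submodule R M) (J : ℕ → Submodule R M) (b : ℕ → M)
    (hb : ∀ i, b (i + 1) - b i ∈ S ⊔ J i) :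
    ∃ c : ℕ → M, (∀ i, c i - b i ∈ S) ∧ ∀ i, c (i + 1) - c i ∈ J i := by
  choose s hs j hj hsj using fun i => Submodule.mem_sup.mp (hb i)
  refine ⟨fun n => b 0 + ∑ k ∈ Finset.range n, j k, fun n => ?_, fun n => ?_⟩
  · have htel : b n - b 0 = ∑ k ∈ Finset.range n, s k + ∑ k ∈ Finset.range n, j k := by
      rw [← Finset.sum_add_distrib, ← Finset.sum_range_sub b n]
      exact Finset.sum_congr rfl fun k _ => (hsj k).symm
    have : b 0 + ∑ k ∈ Finset.range n, j k - b n = -∑ k ∈ Finset.range n, s k := by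
      rw [eq_sub_iff_add_eq'.mpr htel.symm]
      abel
    exact this ▸ S.neg_mem (S.sum_mem fun k _ => hs k)
  · simpa [Finset.sum_range_succ] using hj n

theorem IsAdmissible.exists_sub_mem_of_succ_sub_mem {B : Type*} [CommRing B] [TopologicalSpace B]
    (hB : IsAdmissible B) {J : ℕ → Ideal B} (hJ : IsChainBasis B J) (c : ℕ → B)
    (hc : ∀ i, c (i + 1) - c i ∈ J i) : ∃ l, ∀ i, l - c i ∈ J i := by
  have hcauchy : ∀ i n, i ≤ n → c n - c i ∈ J i := by
    intro i n hin
    induction n, hin using Nat.le_induction with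
    | base => simp
    | succ n hin ih => simpa using add_mem (hJ.1 hin (hc n)) ih
  obtain ⟨l, hl⟩ := hB.complete c fun U hU => by
    obtain ⟨i, hi⟩ := (hJ.2 U).mp hU
    exact ⟨i, fun m hm n hn => hi (by simpa using sub_mem (hcauchy i m hm) (hcauchy i n hn))⟩
  refine ⟨l, fun i => ?_⟩
  obtain ⟨N, hN⟩ := hl _ (hJ.mem_nhds_zero i)
  simpa using add_mem (hN (max N i) (le_max_left _ _)) (hcauchy i (max N i) (le_max_right _ _))

section Level

variable {A B : Type*} [CommRing A] [CommRing B] (φ : A →+* B) (I' : Ideal A)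
  (I : ℕ → Ideal A) (J : ℕ → Ideal B) (hmap : ∀ i, Ideal.map φ (I i) ≤ J i)
  (hdesc : ∀ i, I (i + 1) ≤ I i) (hJdesc : ∀ i, J (i + 1) ≤ J i)

noncomputable def toLevel (i : ℕ) : B →+* tensorLevel A B φ I' I J hmap i :=
  letI := algM A I' I i
  letI := algN A B φ I J hmap i
  Algebra.TensorProduct.includeRight.toRingHom.comp (Ideal.Quotient.mk (J i))

theorem toLevel_surjective (i : ℕ) : Function.Surjective (toLevel φ I' I J hmap i) :=
  letI := algM A I' I i
  letI := algN A B φ I J hmap i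
  (Algebra.TensorProduct.includeRight_surjective _
    (Ideal.Quotient.factor_surjective le_sup_right)).comp Ideal.Quotient.mk_surjective

theorem map_sup_le_ker_toLevel (i : ℕ) :
    Ideal.map φ I' ⊔ J i ≤ RingHom.ker (toLevel φ I' I J hmap i) := by
  let := algM A I' I i
  let := algN A B φ I J hmap i
  refine sup_le (Ideal.map_le_iff_le_comap.mpr fun a ha => ?_) fun b hb => ?_
  · have h : algebraMap (A ⧸ I i) (A ⧸ (I' ⊔ I i)) (Ideal.Quotient.mk (I i) a) = 0 :=
      Ideal.Quotient.eq_zero_iff_mem.mpr (Ideal.mem_sup_left ha)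
    show Algebra.TensorProduct.includeRight
      (algebraMap (A ⧸ I i) (B ⧸ J i) (Ideal.Quotient.mk (I i) a)) = 0
    rw [AlgHom.commutes, Algebra.TensorProduct.algebraMap_apply, h, TensorProduct.zero_tmul]
  · show Algebra.TensorProduct.includeRight (Ideal.Quotient.mk (J i) b) = 0
    rw [Ideal.Quotient.eq_zero_iff_mem.mpr hb, map_zero]

noncomputable def levelToQuot (i : ℕ) :
    tensorLevel A B φ I' I J hmap i →+* B ⧸ (Ideal.map φ I' ⊔ J i) :=
  letI := algM A I' I i
  letI := algN A B φ I J hmap i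
  letI : Algebra (A ⧸ I i) (B ⧸ (Ideal.map φ I' ⊔ J i)) :=
    ((Ideal.Quotient.factor le_sup_right).comp (rN A B φ I J hmap i)).toAlgebra
  (Algebra.TensorProduct.lift (R := A ⧸ I i) (S := A ⧸ I i)
    { toRingHom := Ideal.Quotient.lift (I' ⊔ I i) ((Ideal.Quotient.mk _).comp φ) fun a ha => by
        rw [RingHom.comp_apply, Ideal.Quotient.eq_zero_iff_mem]
        exact (Ideal.map_sup φ I' (I i)).le.trans (sup_le_sup_left (hmap i) _)
          (Ideal.mem_map_of_mem φ ha)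
      commutes' := fun r => by obtain ⟨a, rfl⟩ := Ideal.Quotient.mk_surjective r; rfl }
    { toRingHom := Ideal.Quotient.factor le_sup_right
      commutes' := fun _ => rfl }
    fun _ _ => .all _ _).toRingHom

theorem levelToQuot_toLevel (i : ℕ) (b : B) :
    levelToQuot φ I' I J hmap i (toLevel φ I' I J hmap i b) = Ideal.Quotient.mk _ b := by
  let := algM A I' I i
  let := algN A B φ I J hmap i
  let : Algebra (A ⧸ I i) (B ⧸ (Ideal.map φ I' ⊔ J i)) :=
    ((Ideal.Quotient.factor le_sup_right).comp (rN A B φ I J hmap i)).toAlgebra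
  show Algebra.TensorProduct.lift _ _ _
    ((1 : A ⧸ (I' ⊔ I i)) ⊗ₜ[A ⧸ I i] Ideal.Quotient.mk (J i) b) = _
  rw [Algebra.TensorProduct.lift_tmul, map_one, one_mul]
  rfl

theorem ker_toLevel (i : ℕ) :
    RingHom.ker (toLevel φ I' I J hmap i) = Ideal.map φ I' ⊔ J i := by
  refine le_antisymm (fun b hb => ?_) (map_sup_le_ker_toLevel φ I' I J hmap i)
  rw [← Ideal.Quotient.eq_zero_iff_mem, ← levelToQuot_toLevel, RingHom.mem_ker.mp hb, map_zero]

theorem tensorTrans_toLevel (i : ℕ) (b : B) :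
    tensorTrans A B φ I' I J hmap hdesc hJdesc i (toLevel φ I' I J hmap (i + 1) b) =
      toLevel φ I' I J hmap i b := by
  let := algM A I' I i
  let := algN A B φ I J hmap i
  let := algM A I' I (i + 1)
  let := algN A B φ I J hmap (i + 1)
  let : Algebra (A ⧸ I (i + 1)) (TensorProduct (A ⧸ I i) (A ⧸ (I' ⊔ I i)) (B ⧸ J i)) :=
    ((algebraMap (A ⧸ I i) _).comp (Ideal.Quotient.factor (hdesc i))).toAlgebra
  show (Algebra.TensorProduct.lift _ _ _ :
      _ →ₐ[A ⧸ I (i + 1)] TensorProduct (A ⧸ I i) (A ⧸ (I' ⊔ I i)) (B ⧸ J i))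
    ((1 : A ⧸ (I' ⊔ I (i + 1))) ⊗ₜ[A ⧸ I (i + 1)] Ideal.Quotient.mk (J (i + 1)) b) =
      (1 : A ⧸ (I' ⊔ I i)) ⊗ₜ[A ⧸ I i] Ideal.Quotient.mk (J i) b
  rw [Algebra.TensorProduct.lift_tmul, map_one, one_mul]
  rfl

end Level

section Limit

variable {A B : Type*} [CommRing A] [CommRing B] (φ : A →+* B) (I' : Ideal A)
  (I : ℕ → Ideal A) (J : ℕ → Ideal B) (hmap : ∀ i, Ideal.map φ (I i) ≤ J i)
  (hdesc : ∀ i, I (i + 1) ≤ I i) (hJdesc : ∀ i, J (i + 1) ≤ J i)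

noncomputable def toLimTensor : B →+* limTensor A B φ I' I J hmap hdesc hJdesc :=
  (RingHom.pi (toLevel φ I' I J hmap)).codRestrict _ fun b i =>
    tensorTrans_toLevel φ I' I J hmap hdesc hJdesc i b

theorem toLimTensor_apply (b : B) (i : ℕ) :
    (toLimTensor φ I' I J hmap hdesc hJdesc b : ∀ i, tensorLevel A B φ I' I J hmap i) i =
      toLevel φ I' I J hmap i b :=
  rfl

theorem ker_toLimTensor :
    RingHom.ker (toLimTensor φ I' I J hmap hdesc hJdesc) = ⨅ i, Ideal.map φ I' ⊔ J i := by
  ext b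
  simp only [RingHom.mem_ker, Submodule.mem_iInf, ← ker_toLevel φ I' I J hmap]
  exact ⟨fun h i => congrArg (fun g : limTensor A B φ I' I J hmap hdesc hJdesc => g.1 i) h,
    fun h => Subtype.ext (funext h)⟩

theorem toLimTensor_surjective [TopologicalSpace B] (hB : IsAdmissible B)
    (hJ : IsChainBasis B J) : Function.Surjective (toLimTensor φ I' I J hmap hdesc hJdesc) := by
  intro g
  choose b hb using fun i => toLevel_surjective φ I' I J hmap i (g.1 i)
  have hstep : ∀ i, b (i + 1) - b i ∈ Ideal.map φ I' ⊔ J i := by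
    intro i
    rw [← ker_toLevel φ I' I J hmap, RingHom.mem_ker, map_sub,
      ← tensorTrans_toLevel φ I' I J hmap hdesc hJdesc, hb, hb, g.2 i, sub_self]
  obtain ⟨c, hcb, hc⟩ := Submodule.exists_sub_mem_of_succ_sub_mem_sup _ _ b hstep
  obtain ⟨l, hl⟩ := hB.exists_sub_mem_of_succ_sub_mem hJ c hc
  refine ⟨l, Subtype.ext (funext fun i => ?_)⟩
  have hli : l - b i ∈ RingHom.ker (toLevel φ I' I J hmap i) := by
    rw [ker_toLevel]
    simpa using add_mem (Ideal.mem_sup_right (hl i)) (Ideal.mem_sup_left (hcb i))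
  rw [toLimTensor_apply, ← hb i, ← sub_eq_zero, ← map_sub]
  exact hli

theorem exists_mem_toLimTensor_eq_of_toLevel_eq_zero {i : ℕ} {b : B}
    (hb : toLevel φ I' I J hmap i b = 0) :
    ∃ j ∈ J i, toLimTensor φ I' I J hmap hdesc hJdesc j = toLimTensor φ I' I J hmap hdesc hJdesc b := by
  have hb' : b ∈ Ideal.map φ I' ⊔ J i := ker_toLevel φ I' I J hmap i ▸ RingHom.mem_ker.mpr hb
  obtain ⟨s, hs, j, hj, rfl⟩ := Submodule.mem_sup.mp hb'
  have hs0 : s ∈ RingHom.ker (toLimTensor φ I' I J hmap hdesc hJdesc) := by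
    rw [ker_toLimTensor]
    exact Submodule.mem_iInf _ |>.mpr fun _ => Ideal.mem_sup_left hs
  exact ⟨j, hj, by rw [map_add, RingHom.mem_ker.mp hs0, zero_add]⟩

theorem isTopologicalRing_limTensor :
    letI := limTensorTopology A B φ I' I J hmap hdesc hJdesc
    IsTopologicalRing (limTensor A B φ I' I J hmap hdesc hJdesc) :=
  letI : ∀ i, TopologicalSpace (tensorLevel A B φ I' I J hmap i) := fun _ => ⊥
  haveI : ∀ i, DiscreteTopology (tensorLevel A B φ I' I J hmap i) := fun _ => ⟨rfl⟩
  Subring.instIsTopologicalRing _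

theorem continuous_toLimTensor [TopologicalSpace B] [IsTopologicalRing B]
    (hJ : IsChainBasis B J) :
    letI := limTensorTopology A B φ I' I J hmap hdesc hJdesc
    Continuous (toLimTensor φ I' I J hmap hdesc hJdesc) :=
  letI : ∀ i, TopologicalSpace (tensorLevel A B φ I' I J hmap i) := fun _ => ⊥
  haveI : ∀ i, DiscreteTopology (tensorLevel A B φ I' I J hmap i) := fun _ => ⟨rfl⟩
  continuous_induced_rng.mpr <| continuous_pi fun i =>
    hJ.continuous_of_le_ker (toLevel φ I' I J hmap i) (ker_toLevel φ I' I J hmap i ▸ le_sup_right)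

theorem setOf_apply_eq_zero_mem_nhds (i : ℕ) :
    letI := limTensorTopology A B φ I' I J hmap hdesc hJdesc
    {g : limTensor A B φ I' I J hmap hdesc hJdesc | g.1 i = 0} ∈ 𝓝 0 :=
  letI : ∀ i, TopologicalSpace (tensorLevel A B φ I' I J hmap i) := fun _ => ⊥
  haveI : ∀ i, DiscreteTopology (tensorLevel A B φ I' I J hmap i) := fun _ => ⟨rfl⟩
  (((isOpen_discrete {0}).preimage (continuous_apply i)).preimage
    continuous_subtype_val).mem_nhds rfl

end Limit

theorem stmt_18_general (A : Type*) [CommRing A]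
    (B : Type*) [CommRing B] [TopologicalSpace B] [IsTopologicalRing B]
    (hB : IsAdmissible B) (I : ℕ → Ideal A) (J : ℕ → Ideal B) (hJbasis : IsChainBasis B J)
    (φ : A →+* B) (hmap : ∀ i, Ideal.map φ (I i) ≤ J i) (I' : Ideal A)
    (hdesc : ∀ i, I (i + 1) ≤ I i) (hJdesc : ∀ i, J (i + 1) ≤ J i) :
    letI := limTensorTopology A B φ I' I J hmap hdesc hJdesc
    ∃ e : (limTensor A B φ I' I J hmap hdesc hJdesc) ≃+*
        (B ⧸ (Ideal.map φ I').topologicalClosure),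
      Continuous e ∧ Continuous e.symm := by
  let := limTensorTopology A B φ I' I J hmap hdesc hJdesc
  have := isTopologicalRing_limTensor φ I' I J hmap hdesc hJdesc
  set ψ := toLimTensor φ I' I J hmap hdesc hJdesc
  set K := (Ideal.map φ I').topologicalClosure
  have hψ : Function.Surjective ψ := toLimTensor_surjective φ I' I J hmap hdesc hJdesc hB hJbasis
  have hker : RingHom.ker ψ = K := by
    ext b
    rw [ker_toLimTensor, Submodule.mem_iInf, hJbasis.mem_topologicalClosure_iff]
  have hK : ∀ b ∈ K, ψ b = 0 := fun b hb => RingHom.mem_ker.mp (hker ▸ hb)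
  let e : B ⧸ K ≃+* limTensor A B φ I' I J hmap hdesc hJdesc :=
    RingEquiv.ofBijective (Ideal.Quotient.lift K ψ hK)
      ⟨RingHom.lift_injective_of_ker_le_ideal K hK hker.le,
        Ideal.Quotient.lift_surjective_of_surjective K hK hψ⟩
  refine ⟨e.symm, hJbasis.continuous_ringEquiv_symm e fun i => ?_, ?_⟩
  · refine mem_of_superset (setOf_apply_eq_zero_mem_nhds φ I' I J hmap hdesc hJdesc i)
      fun g hg => ?_
    obtain ⟨b, rfl⟩ := hψ g
    obtain ⟨j, hj, hjb⟩ := exists_mem_toLimTensor_eq_of_toLevel_eq_zero φ I' I J hmap hdesc hJdesc hg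
    exact ⟨j, hj, (e.symm_apply_eq.mpr hjb.symm).symm⟩
  · rw [RingEquiv.symm_symm]
    exact (QuotientRing.isOpenQuotientMap_mk (N := K)).isQuotientMap.continuous_iff.mpr
      (continuous_toLimTensor φ I' I J hmap hdesc hJdesc hJbasis)

/-- `(A/I') ⊗̂_A B ≅ B ⧸ closure(I'B)` as topological rings, for admissible rings `A`, `B`
with bases of ideals of definition `{Iᵢ}`, `{Jᵢ}`, a continuous homomorphism `φ : A → B`
with `φ(Iᵢ) ⊆ Jᵢ`, and a closed ideal `I' ⊆ A`. -/
theorem stmt_18 (A : Type*) [CommRing A] [TopologicalSpace A]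
    (B : Type*) [CommRing B] [TopologicalSpace B] [IsTopologicalRing B]
    (hA : IsAdmissible A) (hB : IsAdmissible B)
    (I : ℕ → Ideal A) (J : ℕ → Ideal B)
    (hIbasis : IsChainBasis A I) (hIdef : ∀ i, IsIdealOfDefinition A (I i))
    (hJbasis : IsChainBasis B J) (hJdef : ∀ i, IsIdealOfDefinition B (J i))
    (φ : A →+* B) (hφ : Continuous φ)
    (hmap : ∀ i, Ideal.map φ (I i) ≤ J i)
    (I' : Ideal A) (hI' : IsClosed (I' : Set A))
    (hdesc : ∀ i, I (i + 1) ≤ I i) (hJdesc : ∀ i, J (i + 1) ≤ J i) :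
    letI := limTensorTopology A B φ I' I J hmap hdesc hJdesc
    ∃ e : (limTensor A B φ I' I J hmap hdesc hJdesc) ≃+*
        (B ⧸ (Ideal.map φ I').topologicalClosure),
      Continuous e ∧ Continuous e.symm :=
  stmt_18_general A B hB I J hJbasis φ hmap I' hdesc hJdesc
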